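/- arXiv:1903.12150 — 4 statements merged into one kernel-verified Lean document; each statement's English description precedes it below -/
import Mathlib

section
/- Let q be a positive integer, w > 0, and define a random hash G: ℝ^q → ℤ^q by G(u)_i = ⌊(u_i - s_i)/w⌋ where s_1,…,s_q are independent uniform random variables on [0,w]. If x, y ∈ ℝ^q satisfy ‖x - y‖₂ ≤ w₀ and w ≥ 2 w₀ q, then P(G(x) = G(y)) ≥ 1/2. -/
open MeasureTheory


lemma floor_ne_exists {a b s w : ℝ} (hw : 0 < w) (hab : a ≤ b)
    (h : ⌊(a - s) / w⌋ ≠ ⌊(b - s) / w⌋) :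
    ∃ m : ℤ, a - s < m * w ∧ m * w ≤ b - s := by
  refine ⟨⌊(b - s) / w⌋, ?_, ?_⟩
  · have hle : ⌊(a - s) / w⌋ ≤ ⌊(b - s) / w⌋ :=
      Int.floor_le_floor (by gcongr <;> linarith)
    have hlt : ⌊(a - s) / w⌋ < ⌊(b - s) / w⌋ := lt_of_le_of_ne hle h
    have h1 : (a - s) / w < (⌊(b - s) / w⌋ : ℝ) := by
      have := Int.lt_floor_add_one ((a - s) / w)
      have : ((⌊(a - s) / w⌋ : ℝ) + 1) ≤ (⌊(b - s) / w⌋ : ℝ) := by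
        exact_mod_cast Int.add_one_le_iff.mpr hlt
      linarith [Int.lt_floor_add_one ((a - s) / w)]
    calc a - s < (⌊(b - s) / w⌋ : ℝ) * w := by
          rwa [div_lt_iff₀ hw] at h1
      _ ≤ _ := le_refl _
  · have := Int.floor_le ((b - s) / w)
    rwa [le_div_iff₀ hw] at this

lemma coord_bound {a b w : ℝ} (hw : 0 < w) (hab : a ≤ b) (hbw : b - a ≤ w) :
    volume {s ∈ Set.Icc (0:ℝ) w | ⌊(a - s) / w⌋ ≠ ⌊(b - s) / w⌋} ≤
      ENNReal.ofReal (b - a) := by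
  set k := ⌊a / w⌋ with hk
  have hk1 : (k : ℝ) * w ≤ a := by
    have := Int.floor_le (a / w); calc (k:ℝ) * w ≤ (a/w) * w := by gcongr
    _ = a := by field_simp
  have hk2 : a < ((k : ℝ) + 1) * w := by
    have := Int.lt_floor_add_one (a / w)
    calc a = (a/w) * w := by field_simp
    _ < ((k:ℝ)+1) * w := by gcongr
  have hsub : {s ∈ Set.Icc (0:ℝ) w | ⌊(a - s) / w⌋ ≠ ⌊(b - s) / w⌋} ⊆
      Set.Ioc (a - k * w) (min (b - k * w) w) ∪
        Set.Icc 0 (b - ((k : ℝ) + 1) * w) := by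
    rintro s ⟨⟨hs0, hsw⟩, hne⟩
    obtain ⟨m, h1, h2⟩ := floor_ne_exists hw hab hne
    have hm1 : k ≤ m := by
      have : ((k : ℝ) - 1) * w < m * w := by nlinarith
      have : (k : ℝ) - 1 < m := by
        exact lt_of_mul_lt_mul_right (by linarith) hw.le
      have h3 : (k : ℤ) - 1 < m := by exact_mod_cast this
      omega
    have hm2 : m ≤ k + 1 := by
      have : (m : ℝ) * w < ((k : ℝ) + 2) * w := by nlinarith
      have : (m : ℝ) < (k : ℝ) + 2 := lt_of_mul_lt_mul_right (by linarith) hw.le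
      have : m < k + 2 := by exact_mod_cast this
      omega
    have hmk : m = k ∨ m = k + 1 := by omega
    rcases hmk with rfl | rfl
    · left
      exact ⟨by linarith, le_min (by linarith) hsw⟩
    · right
      push_cast at h1 h2
      exact ⟨hs0, by linarith⟩
  calc volume {s ∈ Set.Icc (0:ℝ) w | ⌊(a - s) / w⌋ ≠ ⌊(b - s) / w⌋}
      ≤ volume (Set.Ioc (a - k * w) (min (b - k * w) w) ∪
          Set.Icc 0 (b - ((k : ℝ) + 1) * w)) := measure_mono hsub
    _ ≤ volume (Set.Ioc (a - k * w) (min (b - k * w) w)) +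
          volume (Set.Icc 0 (b - ((k : ℝ) + 1) * w)) := measure_union_le _ _
    _ = ENNReal.ofReal (min (b - k * w) w - (a - k * w)) +
          ENNReal.ofReal (b - ((k : ℝ) + 1) * w - 0) := by
        rw [Real.volume_Ioc, Real.volume_Icc]
    _ ≤ ENNReal.ofReal (b - a) := by
        rcases le_or_gt (b - ((k : ℝ) + 1) * w) 0 with h | h
        · rw [show ENNReal.ofReal (b - ((k : ℝ) + 1) * w - 0) = 0 from
            ENNReal.ofReal_eq_zero.2 (by linarith), add_zero]
          apply ENNReal.ofReal_le_ofReal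
          have : min (b - k * w) w ≤ b - k * w := min_le_left _ _
          linarith
        · have hmin : min (b - (k:ℝ) * w) w = w := min_eq_right (by linarith)
          rw [hmin, ← ENNReal.ofReal_add (by linarith) (by linarith)]
          apply ENNReal.ofReal_le_ofReal
          linarith

lemma coord_bound_sym {w : ℝ} (hw : 0 < w) (a b : ℝ) (hab : |a - b| ≤ w) :
    volume {s ∈ Set.Icc (0:ℝ) w | ⌊(a - s) / w⌋ ≠ ⌊(b - s) / w⌋} ≤
      ENNReal.ofReal |a - b| := by
  rcases le_total a b with h | h
  · rw [abs_sub_comm, abs_of_nonneg (sub_nonneg.2 h)] at hab ⊢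
    exact coord_bound hw h hab
  · have hset : {s ∈ Set.Icc (0:ℝ) w | ⌊(a - s) / w⌋ ≠ ⌊(b - s) / w⌋}
        = {s ∈ Set.Icc (0:ℝ) w | ⌊(b - s) / w⌋ ≠ ⌊(a - s) / w⌋} := by
      ext s; simp [ne_comm]
    rw [hset]
    rw [abs_of_nonneg (sub_nonneg.2 h)] at hab ⊢
    exact coord_bound hw h hab

/-- Hash collision probability: hash `G(u)_i = ⌊(u_i - s_i)/w⌋` with i.i.d.
shifts `s_i ∼ Unif[0,w]`. If `‖x - y‖₂ ≤ w₀` and `w ≥ 2·w₀·q`, then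
`P(G(x) = G(y)) ≥ 1/2`. -/
theorem stmt_1 (q : ℕ) (hq : 0 < q) (w w₀ : ℝ) (hw : 0 < w) (hw₀ : 0 < w₀)
    (hgrid : 2 * w₀ * q ≤ w)
    (x y : EuclideanSpace ℝ (Fin q)) (hxy : ‖x - y‖ ≤ w₀) :
    1 / 2 ≤
      (Measure.pi fun _ : Fin q =>
          (ENNReal.ofReal w)⁻¹ • volume.restrict (Set.Icc (0 : ℝ) w))
        {s : Fin q → ℝ | ∀ i, ⌊(x i - s i) / w⌋ = ⌊(y i - s i) / w⌋} := by
  have coord_bound' : ∀ a b : ℝ, |a - b| ≤ w →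
      volume {s ∈ Set.Icc (0:ℝ) w | ⌊(a - s) / w⌋ ≠ ⌊(b - s) / w⌋} ≤
        ENNReal.ofReal |a - b| := fun a b hab => coord_bound_sym hw a b hab
  have hwne : ENNReal.ofReal w ≠ 0 := by
    simp [ENNReal.ofReal_eq_zero, not_le, hw]
  set μ0 : Measure ℝ := (ENNReal.ofReal w)⁻¹ • volume.restrict (Set.Icc (0:ℝ) w)
    with hμ0
  haveI hprob : IsProbabilityMeasure μ0 := by
    constructor
    rw [hμ0, Measure.smul_apply, Measure.restrict_apply_univ, Real.volume_Icc,
      sub_zero, smul_eq_mul, ENNReal.inv_mul_cancel hwne ENNReal.ofReal_ne_top]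
  set μ := Measure.pi fun _ : Fin q => μ0 with hμ
  -- per coordinate abs bound
  have habs : ∀ i, |x i - y i| ≤ w₀ := by
    intro i
    have h1 : |x i - y i| = ‖(x - y) i‖ := by
      simp [PiLp.sub_apply, Real.norm_eq_abs]
    have h2 : ‖(x - y) i‖ ≤ ‖x - y‖ := by
      rw [EuclideanSpace.norm_eq]
      have : ‖(x - y) i‖ = Real.sqrt (‖(x - y) i‖ ^ 2) := by
        rw [Real.sqrt_sq (norm_nonneg _)]
      rw [this]
      apply Real.sqrt_le_sqrt
      exact Finset.single_le_sum (f := fun j => ‖(x - y) j‖ ^ 2)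
        (fun j _ => sq_nonneg _) (Finset.mem_univ i)
    linarith
  have hw₀w : w₀ ≤ w := by
    have : (1 : ℝ) ≤ q := by exact_mod_cast hq
    nlinarith
  -- measurable sets
  set B : Fin q → Set ℝ := fun i => {t | ⌊(x i - t) / w⌋ ≠ ⌊(y i - t) / w⌋} with hB
  have hBm : ∀ i, MeasurableSet (B i) := by
    intro i
    have hf : Measurable fun t : ℝ => ⌊(x i - t) / w⌋ :=
      ((measurable_const.sub measurable_id).div_const w).floor
    have hg : Measurable fun t : ℝ => ⌊(y i - t) / w⌋ :=
      ((measurable_const.sub measurable_id).div_const w).floor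
    exact (measurableSet_eq_fun hf hg).compl
  -- bound on each coordinate measure
  have hμ0B : ∀ i, μ0 (B i) ≤ (ENNReal.ofReal w)⁻¹ * ENNReal.ofReal w₀ := by
    intro i
    rw [hμ0, Measure.smul_apply, Measure.restrict_apply' measurableSet_Icc,
      smul_eq_mul]
    have h1 : B i ∩ Set.Icc (0:ℝ) w
        = {s ∈ Set.Icc (0:ℝ) w | ⌊(x i - s) / w⌋ ≠ ⌊(y i - s) / w⌋} := by
      ext t; simp [hB, Set.mem_inter_iff, and_comm]
    rw [h1]
    refine mul_le_mul_right ?_ _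
    calc volume {s ∈ Set.Icc (0:ℝ) w | ⌊(x i - s) / w⌋ ≠ ⌊(y i - s) / w⌋}
        ≤ ENNReal.ofReal |x i - y i| := coord_bound' _ _ (le_trans (habs i) hw₀w)
      _ ≤ ENNReal.ofReal w₀ := ENNReal.ofReal_le_ofReal (habs i)
  -- good set and its complement
  set G : Set (Fin q → ℝ) :=
    {s : Fin q → ℝ | ∀ i, ⌊(x i - s i) / w⌋ = ⌊(y i - s i) / w⌋} with hG
  have hGm : MeasurableSet G := by
    have : G = ⋂ i, Function.eval i ⁻¹' (B i)ᶜ := by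
      ext s; simp [hG, hB, Function.eval]
    rw [this]
    exact MeasurableSet.iInter fun i => ((hBm i).compl).preimage (measurable_pi_apply i)
  have hGc : Gᶜ = ⋃ i, Function.eval i ⁻¹' (B i) := by
    ext s; simp [hG, hB, Function.eval]
  -- measure of each cylinder
  have hcyl : ∀ i, μ (Function.eval i ⁻¹' (B i)) = μ0 (B i) := by
    intro i
    rw [Set.eval_preimage, hμ, Measure.pi_pi]
    rw [Finset.prod_eq_single i
      (fun j _ hj => by simp [Function.update_of_ne hj, measure_univ])
      (fun h => absurd (Finset.mem_univ i) h)]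
    simp
  -- union bound
  have hunion : μ Gᶜ ≤ 1 / 2 := by
    rw [hGc]
    calc μ (⋃ i, Function.eval i ⁻¹' (B i))
        ≤ ∑' i, μ (Function.eval i ⁻¹' (B i)) := measure_iUnion_le _
      _ = ∑ i, μ0 (B i) := by rw [tsum_fintype]; exact Finset.sum_congr rfl fun i _ => hcyl i
      _ ≤ Finset.univ.sum (fun _j : Fin q => (ENNReal.ofReal w)⁻¹ * ENNReal.ofReal w₀) :=
          Finset.sum_le_sum fun i _ => hμ0B i
      _ = (q : ENNReal) * ((ENNReal.ofReal w)⁻¹ * ENNReal.ofReal w₀) := by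
          rw [Finset.sum_const, Finset.card_univ, Fintype.card_fin, nsmul_eq_mul]
      _ ≤ 1 / 2 := by
          have hq' : (q : ENNReal) = ENNReal.ofReal (q : ℝ) := by
            rw [ENNReal.ofReal_natCast]
          rw [hq', mul_comm (ENNReal.ofReal w)⁻¹ _, ← mul_assoc,
            ← ENNReal.ofReal_mul (by positivity), ← div_eq_mul_inv,
            ← ENNReal.ofReal_div_of_pos hw]
          have h12 : (1 / 2 : ENNReal) = ENNReal.ofReal (1 / 2) := by
            rw [ENNReal.ofReal_div_of_pos (by norm_num), ENNReal.ofReal_one,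
              ENNReal.ofReal_ofNat]
          rw [h12]
          apply ENNReal.ofReal_le_ofReal
          rw [div_le_div_iff₀ hw (by norm_num : (0:ℝ) < 2)]
          nlinarith
  -- conclude
  have h1 : μ G = 1 - μ Gᶜ := by
    have := measure_compl hGm.compl (measure_ne_top μ Gᶜ)
    rwa [compl_compl, measure_univ] at this
  have h2 : (1 : ENNReal) - 1 / 2 = 1 / 2 := by
    simpa using ENNReal.sub_half (a := 1) ENNReal.one_ne_top
  rw [show (Measure.pi fun _ : Fin q => μ0) G = μ G from rfl] at *
  rw [h1, ← h2]
  exact tsub_le_tsub_left hunion 1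
end

section
/- For a single coordinate of the randomly shifted grid hash: if s is uniform on [0,w] and a, b ∈ ℝ with |a - b| ≤ w, then the probability that ⌊(a - s)/w⌋ ≠ ⌊(b - s)/w⌋ equals |a - b|/w. -/
open MeasureTheory

lemma key_set_eq (w : ℝ) (hw : 0 < w) (a b : ℝ) (hab : a ≤ b) (hba : b ≤ a + w) :
    {s : ℝ | ⌊(a - s) / w⌋ ≠ ⌊(b - s) / w⌋} ∩ Set.Ioc 0 w
      = Set.Ioc (max (a - (⌊b / w⌋ : ℝ) * w) 0) (b - (⌊b / w⌋ : ℝ) * w)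
        ∪ Set.Ioc (a - ((⌊b / w⌋ : ℝ) - 1) * w) w := by
  set m : ℤ := ⌊b / w⌋ with hm
  have hm1 : (m : ℝ) * w ≤ b := by
    have h := Int.floor_le (b / w)
    have := mul_le_mul_of_nonneg_right h hw.le
    rwa [div_mul_cancel₀ _ hw.ne'] at this
  have hm2 : b < ((m : ℝ) + 1) * w := by
    have h : b / w < (m : ℝ) + 1 := by exact_mod_cast Int.lt_floor_add_one (b / w)
    have := mul_lt_mul_of_pos_right h hw
    rwa [div_mul_cancel₀ _ hw.ne'] at this
  ext s
  simp only [Set.mem_inter_iff, Set.mem_setOf_eq, Set.mem_Ioc, Set.mem_union]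
  constructor
  · rintro ⟨hne, hs0, hsw⟩
    set k : ℤ := ⌊(b - s) / w⌋ with hk
    have hk2 : (k : ℝ) * w ≤ b - s := by
      have h := Int.floor_le ((b - s) / w)
      have := mul_le_mul_of_nonneg_right h hw.le
      rwa [div_mul_cancel₀ _ hw.ne'] at this
    have hk1 : a - s < (k : ℝ) * w := by
      have hle : ⌊(a - s) / w⌋ ≤ k := by
        rw [hk]
        gcongr
      have hlt : ⌊(a - s) / w⌋ < k := lt_of_le_of_ne hle hne
      have : (a - s) / w < (k : ℝ) := by exact_mod_cast Int.floor_lt.mp hlt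
      have := mul_lt_mul_of_pos_right this hw
      rwa [div_mul_cancel₀ _ hw.ne'] at this
    have hkm : k ≤ m := by
      rw [hm]
      apply Int.le_floor.mpr
      rw [le_div_iff₀ hw]
      linarith
    have hkm' : m - 1 ≤ k := by
      have h1 : ((m : ℝ) - 2) * w < (k : ℝ) * w := by nlinarith
      have h2 : (m : ℝ) - 2 < (k : ℝ) := lt_of_mul_lt_mul_right h1 hw.le
      have : (m : ℤ) - 2 < k := by exact_mod_cast h2
      omega
    clear_value k
    have hcase : k = m ∨ k = m - 1 := by omega
    rcases hcase with rfl | rfl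
    · left
      constructor
      · exact max_lt (by linarith) hs0
      · linarith
    · right
      push_cast at hk1 hk2
      constructor
      · linarith
      · exact hsw
  · rintro (⟨h1, h2⟩ | ⟨h1, h2⟩)
    · have hx : a - (m : ℝ) * w < s := lt_of_le_of_lt (le_max_left _ _) h1
      have hs0 : 0 < s := lt_of_le_of_lt (le_max_right _ _) h1
      have hfa : ⌊(a - s) / w⌋ < m := by
        rw [Int.floor_lt]
        rw [div_lt_iff₀ hw]
        linarith
      have hfb : m ≤ ⌊(b - s) / w⌋ := by
        rw [Int.le_floor]
        rw [le_div_iff₀ hw]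
        linarith
      exact ⟨by omega, hs0, by linarith⟩
    · have ha : (m : ℝ) * w - w ≤ a := by linarith
      have hs0 : 0 < s := by
        have : (0 : ℝ) ≤ a - ((m : ℝ) - 1) * w := by nlinarith
        linarith
      have hfa : ⌊(a - s) / w⌋ < m - 1 := by
        rw [Int.floor_lt, div_lt_iff₀ hw]
        push_cast
        linarith
      have hfb : m - 1 ≤ ⌊(b - s) / w⌋ := by
        rw [Int.le_floor, le_div_iff₀ hw]
        push_cast
        linarith
      exact ⟨by omega, hs0, h2⟩

lemma key_vol (w : ℝ) (hw : 0 < w) (a b : ℝ) (hab : a ≤ b) (hba : b ≤ a + w) :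
    volume ({s : ℝ | ⌊(a - s) / w⌋ ≠ ⌊(b - s) / w⌋} ∩ Set.Ioc 0 w)
      = ENNReal.ofReal (b - a) := by
  rw [key_set_eq w hw a b hab hba]
  set m : ℤ := ⌊b / w⌋ with hm
  have hm1 : (m : ℝ) * w ≤ b := by
    have h := Int.floor_le (b / w)
    have := mul_le_mul_of_nonneg_right h hw.le
    rwa [div_mul_cancel₀ _ hw.ne'] at this
  have hdisj : Disjoint (Set.Ioc (max (a - (m : ℝ) * w) 0) (b - (m : ℝ) * w))
      (Set.Ioc (a - ((m : ℝ) - 1) * w) w) := by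
    apply Set.Ioc_disjoint_Ioc.mpr
    have : b - (m : ℝ) * w ≤ a - ((m : ℝ) - 1) * w := by linarith
    calc min (b - (m : ℝ) * w) w ≤ b - (m : ℝ) * w := min_le_left _ _
    _ ≤ a - ((m : ℝ) - 1) * w := this
    _ ≤ max (max (a - (m : ℝ) * w) 0) (a - ((m : ℝ) - 1) * w) := le_max_right _ _
  rw [measure_union hdisj measurableSet_Ioc, Real.volume_Ioc, Real.volume_Ioc]
  rcases le_total ((m : ℝ) * w) a with hma | hma
  · rw [max_eq_left (by linarith)]
    have h2 : w - (a - ((m : ℝ) - 1) * w) ≤ 0 := by linarith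
    rw [ENNReal.ofReal_eq_zero.mpr h2, add_zero]
    congr 1
    ring
  · rw [max_eq_right (by linarith)]
    rw [← ENNReal.ofReal_add (by linarith) (by linarith)]
    congr 1
    ring

/-- Single-coordinate collision probability for a randomly shifted grid:
if `s ∼ Unif[0,w]` and `|a - b| ≤ w`, then
`P(⌊(a-s)/w⌋ ≠ ⌊(b-s)/w⌋) = |a - b|/w`. -/
theorem stmt_2 (w : ℝ) (hw : 0 < w) (a b : ℝ) (hab : |a - b| ≤ w) :
    ((ENNReal.ofReal w)⁻¹ • volume.restrict (Set.Icc (0 : ℝ) w))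
        {s : ℝ | ⌊(a - s) / w⌋ ≠ ⌊(b - s) / w⌋}
      = ENNReal.ofReal (|a - b| / w) := by
  have hrestrict : volume.restrict (Set.Icc (0 : ℝ) w) = volume.restrict (Set.Ioc 0 w) :=
    Measure.restrict_congr_set Ioc_ae_eq_Icc.symm
  rw [Measure.smul_apply, hrestrict, Measure.restrict_apply' measurableSet_Ioc, smul_eq_mul]
  rcases le_total a b with h | h
  · rw [abs_of_nonpos (by linarith), key_vol w hw a b h (by rw [abs_of_nonpos (by linarith)] at hab; linarith)]
    rw [ENNReal.ofReal_div_of_pos hw, ENNReal.div_eq_inv_mul]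
    norm_num
  · have hset : {s : ℝ | ⌊(a - s) / w⌋ ≠ ⌊(b - s) / w⌋} = {s : ℝ | ⌊(b - s) / w⌋ ≠ ⌊(a - s) / w⌋} := by
      ext s; exact ne_comm
    rw [hset, abs_of_nonneg (by linarith), key_vol w hw b a h (by rw [abs_of_nonneg (by linarith)] at hab; linarith)]
    rw [ENNReal.ofReal_div_of_pos hw, ENNReal.div_eq_inv_mul]
end

section
/- For the Laplacian matrix L of an unweighted undirected graph on n vertices, every nonzero eigenvalue of L is at least 1/(8n²). -/
/-!
Let `u` maximise `|x u|`. The indicator of the component of `u` lies in the kernel of the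
symmetric matrix `L`, so the eigenvector `x` of the nonzero eigenvalue `μ` is orthogonal to it,
and some `w` in that component has `x u * x w ≤ 0`. Cauchy–Schwarz along a path from `u` to `w`,
which has fewer than `n` edges, gives
`x u ^ 2 ≤ (x u - x w) ^ 2 ≤ 2 n xᵀ L x = 2 n μ ‖x‖² ≤ 2 n² μ x u ^ 2`,
so in fact `μ ≥ 1 / (2 n²)`.
-/

open Matrix Finset

namespace Matrix

theorem IsSymm.dotProduct_eq_zero_of_mulVec_eq_smul {n R : Type*} [Fintype n] [CommRing R]
    [NoZeroDivisors R] {A : Matrix n n R} (hA : A.IsSymm) {μ : R} {x c : n → R}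
    (heig : A *ᵥ x = μ • x) (hμ : μ ≠ 0) (hc : A *ᵥ c = 0) : c ⬝ᵥ x = 0 := by
  have h : c ⬝ᵥ A *ᵥ x = (A *ᵥ c) ⬝ᵥ x := by
    rw [dotProduct_mulVec, ← mulVec_transpose, hA.eq]
  rw [hc, zero_dotProduct, heig, dotProduct_smul, smul_eq_mul] at h
  exact (mul_eq_zero.mp h).resolve_left hμ

end Matrix

namespace SimpleGraph

variable {V : Type*} {G : SimpleGraph V}

theorem Walk.sum_darts_sub {R : Type*} [AddCommGroup R] (x : V → R) {a b : V} (p : G.Walk a b) :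
    (p.darts.map fun d => x d.fst - x d.snd).sum = x a - x b := by
  induction p with
  | nil => simp
  | cons _ _ ih => simp [ih]

theorem Walk.IsPath.sq_sub_le_length_mul [DecidableEq V] (x : V → ℝ) {a b : V}
    {p : G.Walk a b} (hp : p.IsPath) :
    (x a - x b) ^ 2 ≤
      p.length * ∑ q ∈ (p.darts.map Dart.toProd).toFinset, (x q.1 - x q.2) ^ 2 := by
  have hnodup : (p.darts.map Dart.toProd).Nodup :=
    (Walk.darts_nodup_of_support_nodup hp.support_nodup).map Dart.ext
  have hsum : x a - x b = ∑ q ∈ (p.darts.map Dart.toProd).toFinset, (x q.1 - x q.2) := by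
    rw [List.sum_toFinset _ hnodup, List.map_map, ← p.sum_darts_sub x]
    rfl
  have hcard : #(p.darts.map Dart.toProd).toFinset = p.length := by
    rw [List.toFinset_card_of_nodup hnodup, List.length_map, Walk.length_darts]
  rw [hsum, ← hcard]
  exact sq_sum_le_card_mul_sum_sq

variable [Fintype V] [DecidableEq V] [DecidableRel G.Adj]

theorem sum_sq_sub_le_two_mul_dotProduct_lapMatrix_mulVec (x : V → ℝ) {s : Finset (V × V)}
    (hs : ∀ q ∈ s, G.Adj q.1 q.2) :
    ∑ q ∈ s, (x q.1 - x q.2) ^ 2 ≤ 2 * (x ⬝ᵥ G.lapMatrix ℝ *ᵥ x) := by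
  have hform : 2 * (x ⬝ᵥ G.lapMatrix ℝ *ᵥ x) =
      ∑ q ∈ univ.filter (fun q : V × V => G.Adj q.1 q.2), (x q.1 - x q.2) ^ 2 := by
    rw [← toLinearMap₂'_apply', lapMatrix_toLinearMap₂', mul_div_cancel₀ _ two_ne_zero,
      sum_filter, Fintype.sum_prod_type]
  rw [hform]
  exact sum_le_sum_of_subset_of_nonneg (fun q hq => mem_filter.mpr ⟨mem_univ q, hs q hq⟩)
    (fun _ _ _ => sq_nonneg _)

theorem Reachable.sq_sub_le_two_mul_card_mul_dotProduct_lapMatrix_mulVec (x : V → ℝ) {u w : V}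
    (h : G.Reachable u w) :
    (x u - x w) ^ 2 ≤ 2 * Fintype.card V * (x ⬝ᵥ G.lapMatrix ℝ *ᵥ x) := by
  obtain ⟨p⟩ := h
  have hp := p.bypass_isPath
  have hdarts : ∀ q ∈ (p.bypass.darts.map Dart.toProd).toFinset, G.Adj q.1 q.2 := by
    simp only [List.mem_toFinset, List.mem_map]
    rintro _ ⟨d, -, rfl⟩
    exact d.adj
  calc (x u - x w) ^ 2
      ≤ p.bypass.length * ∑ q ∈ (p.bypass.darts.map Dart.toProd).toFinset, (x q.1 - x q.2) ^ 2 :=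
        hp.sq_sub_le_length_mul x
    _ ≤ Fintype.card V * (2 * (x ⬝ᵥ G.lapMatrix ℝ *ᵥ x)) := by
        gcongr
        · exact Nat.cast_le.mpr hp.length_lt.le
        · exact sum_sq_sub_le_two_mul_dotProduct_lapMatrix_mulVec x hdarts
    _ = 2 * Fintype.card V * (x ⬝ᵥ G.lapMatrix ℝ *ᵥ x) := by ring

variable {μ : ℝ} {x : V → ℝ}

theorem sum_reachable_eq_zero_of_lapMatrix_mulVec_eq_smul (heig : G.lapMatrix ℝ *ᵥ x = μ • x)
    (hμ : μ ≠ 0) (u : V) : ∑ v ∈ univ.filter (G.Reachable u), x v = 0 := by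
  let c : V → ℝ := fun v => if G.Reachable u v then 1 else 0
  have hc : G.lapMatrix ℝ *ᵥ c = 0 :=
    (lapMatrix_mulVec_eq_zero_iff_forall_reachable G).mpr fun i j hij => by
      have hiff : G.Reachable u i ↔ G.Reachable u j := ⟨(·.trans hij), (·.trans hij.symm)⟩
      simp only [c, hiff]
  have := (isSymm_lapMatrix ℝ G).dotProduct_eq_zero_of_mulVec_eq_smul heig hμ hc
  simpa [c, dotProduct, sum_filter] using this

theorem exists_reachable_mul_nonpos_of_lapMatrix_mulVec_eq_smul
    (heig : G.lapMatrix ℝ *ᵥ x = μ • x) (hμ : μ ≠ 0) (u : V) :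
    ∃ w, G.Reachable u w ∧ x u * x w ≤ 0 := by
  have hsum : ∑ v ∈ univ.filter (G.Reachable u), x u * x v ≤
      ∑ _v ∈ univ.filter (G.Reachable u), 0 := by
    rw [← mul_sum, sum_reachable_eq_zero_of_lapMatrix_mulVec_eq_smul heig hμ u]
    simp
  obtain ⟨w, hw, hxw⟩ := exists_le_of_sum_le ⟨u, by simp⟩ hsum
  exact ⟨w, (mem_filter.mp hw).2, hxw⟩

theorem one_le_two_mul_card_sq_mul_of_lapMatrix_mulVec_eq_smul (hx : x ≠ 0)
    (heig : G.lapMatrix ℝ *ᵥ x = μ • x) (hμ : μ ≠ 0) :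
    1 ≤ 2 * (Fintype.card V : ℝ) ^ 2 * μ := by
  set n : ℝ := (Fintype.card V : ℝ)
  obtain ⟨v₀, hv₀⟩ := Function.ne_iff.mp hx
  obtain ⟨u, -, hu⟩ := exists_max_image univ (fun v => |x v|) ⟨v₀, mem_univ v₀⟩
  have hxu : 0 < x u ^ 2 := by
    rw [← sq_abs]
    exact pow_pos ((abs_pos.mpr hv₀).trans_le (hu v₀ (mem_univ v₀))) 2
  have hnorm : x ⬝ᵥ x ≤ n * x u ^ 2 := by
    simpa [dotProduct, ← sq] using
      sum_le_card_nsmul univ _ _ fun v _ => sq_le_sq.mpr (hu v (mem_univ v))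
  obtain ⟨w, hw, hxw⟩ := exists_reachable_mul_nonpos_of_lapMatrix_mulVec_eq_smul heig hμ u
  have hpoincare : x u ^ 2 ≤ 2 * n * μ * (x ⬝ᵥ x) :=
    calc x u ^ 2 ≤ (x u - x w) ^ 2 := by nlinarith
      _ ≤ 2 * n * (x ⬝ᵥ G.lapMatrix ℝ *ᵥ x) :=
        hw.sq_sub_le_two_mul_card_mul_dotProduct_lapMatrix_mulVec x
      _ = 2 * n * μ * (x ⬝ᵥ x) := by rw [heig, dotProduct_smul, smul_eq_mul]; ring
  have hμ_pos : 0 < μ := by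
    by_contra! hμ_nonpos
    have : 2 * n * μ * (x ⬝ᵥ x) ≤ 0 :=
      mul_nonpos_of_nonpos_of_nonneg (mul_nonpos_of_nonneg_of_nonpos (by positivity) hμ_nonpos)
        (dotProduct_self_star_nonneg x)
    linarith
  have : x u ^ 2 ≤ 2 * n ^ 2 * μ * x u ^ 2 :=
    calc x u ^ 2 ≤ 2 * n * μ * (x ⬝ᵥ x) := hpoincare
      _ ≤ 2 * n * μ * (n * x u ^ 2) := by gcongr
      _ = 2 * n ^ 2 * μ * x u ^ 2 := by ring
  exact le_of_mul_le_mul_right (by linarith) hxu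

end SimpleGraph

/-- Every nonzero eigenvalue of the Laplacian of a simple unweighted undirected
graph on `n` vertices is at least `1/(8n²)`. -/
theorem stmt_6 {V : Type*} [Fintype V] [DecidableEq V] (G : SimpleGraph V)
    [DecidableRel G.Adj] (μ : ℝ) (x : V → ℝ) (hx : x ≠ 0)
    (heig : (G.lapMatrix ℝ).mulVec x = μ • x) (hμ : μ ≠ 0) :
    1 / (8 * (Fintype.card V : ℝ) ^ 2) ≤ μ := by
  have hcard : (0 : ℝ) < Fintype.card V := by
    obtain ⟨v, -⟩ := Function.ne_iff.mp hx
    exact_mod_cast Fintype.card_pos_iff.mpr ⟨v⟩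
  have := G.one_le_two_mul_card_sq_mul_of_lapMatrix_mulVec_eq_smul hx heig hμ
  rw [div_le_iff₀ (by positivity)]
  nlinarith
end

section
/- Let K = L + γI with L a graph Laplacian and γ > 0, fix vertices x, v, and define the vector y ∈ ℝ^{V×V} by y_{ab} = (χ_a − χ_b)ᵀ K⁻¹ (χ_x − χ_v) / τ where τ = (χ_x − χ_v)ᵀ K⁻¹ (χ_x − χ_v) > 0. Then every entry of y lies in [−1, 1]. -/
/-!
Put `u = K⁻¹ b_{xv}`, so that `(L + γ) u = χ_x - χ_v` and `y_{ab} = (u a - u b) / (u x - u v)`.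
Summing the equation gives `∑ u = 0`, since the columns of `L` sum to zero. At a maximiser `m`
of `u` we have `(L u) m ≥ 0`, so `γ u m ≤ (χ_x - χ_v) m`; if `m ≠ x` this forces `u ≤ 0`, hence
`u = 0` by `∑ u = 0`. So `u` is maximal at `x`, and likewise minimal at `v`, which gives
`|u a - u b| ≤ u x - u v = τ`.
-/

open Matrix

def bvec {V : Type*} [Fintype V] [DecidableEq V] (a b : V) : V → ℝ :=
  Pi.single a 1 - Pi.single b 1

namespace SimpleGraph

variable {V R : Type*} [Fintype V] [DecidableEq V] (G : SimpleGraph V) [DecidableRel G.Adj]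

theorem sum_lapMatrix_mulVec [CommRing R] (u : V → R) : ∑ i, (G.lapMatrix R *ᵥ u) i = 0 := by
  have h : (fun _ => 1 : V → R) ⬝ᵥ (G.lapMatrix R *ᵥ u) = 0 := by
    rw [dotProduct_mulVec, ← mulVec_transpose, (isSymm_lapMatrix (R := R) G).eq,
      lapMatrix_mulVec_const_eq_zero, zero_dotProduct]
  simpa [dotProduct] using h

theorem lapMatrix_mulVec_apply_nonneg_of_le [Ring R] [LinearOrder R] [IsOrderedRing R]
    {u : V → R} {m : V} (hm : ∀ w, u w ≤ u m) : 0 ≤ (G.lapMatrix R *ᵥ u) m := by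
  rw [lapMatrix_mulVec_apply, sub_nonneg]
  calc ∑ j ∈ G.neighborFinset m, u j ≤ ∑ _j ∈ G.neighborFinset m, u m :=
        Finset.sum_le_sum fun j _ => hm j
    _ = G.degree m * u m := by
        rw [Finset.sum_const, card_neighborFinset_eq_degree, nsmul_eq_mul]

theorem posDef_lapMatrix_add_smul_one {γ : ℝ} (hγ : 0 < γ) :
    (G.lapMatrix ℝ + γ • (1 : Matrix V V ℝ)).PosDef := by
  refine PosDef.posSemidef_add (posSemidef_lapMatrix ℝ G) ?_
  rw [smul_one_eq_diagonal]
  exact posDef_diagonal_iff.mpr fun _ => hγ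

theorem le_of_lapMatrix_add_smul_one_mulVec_eq [Field R] [LinearOrder R] [IsStrictOrderedRing R]
    {γ : R} (hγ : 0 < γ) {u f : V → R} (hu : (G.lapMatrix R + γ • (1 : Matrix V V R)) *ᵥ u = f)
    (hf_sum : ∑ w, f w = 0) {x : V} (hf : ∀ w ≠ x, f w ≤ 0) (w : V) : u w ≤ u x := by
  have hentry : ∀ w, (G.lapMatrix R *ᵥ u) w + γ * u w = f w := fun w => by
    simp [← hu, add_mulVec, smul_mulVec]
  have hsum : ∑ w, u w = 0 := by
    have h := Finset.sum_congr rfl fun w (_ : w ∈ Finset.univ) => hentry w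
    rw [Finset.sum_add_distrib, sum_lapMatrix_mulVec, zero_add, ← Finset.mul_sum,
      hf_sum] at h
    exact (mul_eq_zero.mp h).resolve_left hγ.ne'
  obtain ⟨m, -, hm⟩ := Finset.exists_max_image Finset.univ u ⟨x, Finset.mem_univ x⟩
  replace hm : ∀ w, u w ≤ u m := fun w => hm w (Finset.mem_univ w)
  by_contra! hxw
  have hmx : m ≠ x := by rintro rfl; exact (hxw.trans_le (hm w)).false
  have hum : u m ≤ 0 := by
    have hLu := G.lapMatrix_mulVec_apply_nonneg_of_le hm
    exact nonpos_of_mul_nonpos_right (by linarith [hentry m, hf m hmx]) hγ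
  have hzero := (Finset.sum_eq_zero_iff_of_nonpos fun w _ => (hm w).trans hum).mp hsum
  rw [hzero x (Finset.mem_univ x), hzero w (Finset.mem_univ w)] at hxw
  exact hxw.false

end SimpleGraph

section bvec

variable {V : Type*} [Fintype V] [DecidableEq V]

theorem bvec_dotProduct (a b : V) (w : V → ℝ) : bvec a b ⬝ᵥ w = w a - w b := by
  simp [bvec, sub_dotProduct]

theorem sum_bvec (a b : V) : ∑ w, bvec a b w = 0 := by
  simp [bvec, Finset.sum_sub_distrib]

theorem neg_bvec (a b : V) : -bvec a b = bvec b a := by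
  simp [bvec]

theorem bvec_apply_nonpos {a b w : V} (hw : w ≠ a) : bvec a b w ≤ 0 := by
  rw [bvec, Pi.sub_apply, Pi.single_eq_of_ne hw, zero_sub, neg_nonpos, Pi.single_apply]
  split_ifs <;> norm_num

theorem bvec_ne_zero {a b : V} (hab : a ≠ b) : bvec a b ≠ 0 := fun h => by
  simpa [bvec, hab] using congrFun h a

end bvec

/-- For `K = L + γI` with `L` a graph Laplacian and `γ > 0`, and distinct
vertices `x ≠ v`, set `τ = b_{xv}ᵀ K⁻¹ b_{xv}`. Then `τ > 0`, and every entry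
`y_{ab} = (b_{ab}ᵀ K⁻¹ b_{xv})/τ` lies in `[-1, 1]`. -/
theorem stmt_14 {V : Type*} [Fintype V] [DecidableEq V] (G : SimpleGraph V)
    [DecidableRel G.Adj] (γ : ℝ) (hγ : 0 < γ)
    (K : Matrix V V ℝ) (hK : K = G.lapMatrix ℝ + γ • (1 : Matrix V V ℝ))
    (x v : V) (hxv : x ≠ v) :
    0 < bvec x v ⬝ᵥ K⁻¹.mulVec (bvec x v) ∧
    ∀ a b : V,
      -1 ≤ (bvec a b ⬝ᵥ K⁻¹.mulVec (bvec x v)) /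
          (bvec x v ⬝ᵥ K⁻¹.mulVec (bvec x v)) ∧
      (bvec a b ⬝ᵥ K⁻¹.mulVec (bvec x v)) /
          (bvec x v ⬝ᵥ K⁻¹.mulVec (bvec x v)) ≤ 1 := by
  have hPD : K.PosDef := hK ▸ G.posDef_lapMatrix_add_smul_one hγ
  have hτ : 0 < bvec x v ⬝ᵥ K⁻¹ *ᵥ bvec x v := by
    simpa using hPD.inv.dotProduct_mulVec_pos (bvec_ne_zero hxv)
  set u := K⁻¹ *ᵥ bvec x v
  have hKu : K *ᵥ u = bvec x v := by
    rw [mulVec_mulVec, mul_nonsing_inv K ((isUnit_iff_isUnit_det K).mp hPD.isUnit), one_mulVec]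
  have hmax : ∀ w, u w ≤ u x := G.le_of_lapMatrix_add_smul_one_mulVec_eq hγ (hK ▸ hKu)
    (sum_bvec x v) fun w hw => bvec_apply_nonpos hw
  have hmin : ∀ w, u v ≤ u w := fun w => neg_le_neg_iff.mp <|
    G.le_of_lapMatrix_add_smul_one_mulVec_eq hγ (by rw [mulVec_neg, ← hK, hKu, neg_bvec])
      (sum_bvec v x) (fun w hw => bvec_apply_nonpos hw) w
  refine ⟨hτ, fun a b => ⟨?_, ?_⟩⟩
  · rw [le_div_iff₀ hτ, bvec_dotProduct, bvec_dotProduct]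
    linarith [hmax b, hmin a]
  · rw [div_le_one hτ, bvec_dotProduct, bvec_dotProduct]
    linarith [hmax a, hmin b]
end
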